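/- arXiv:1810.07327 — 3 statements merged into one kernel-verified Lean document; each statement's English description precedes it below -/
import Mathlib

section
/- Let α > 1, β ∈ (0,1), σ = α/β, M > 0, and s ∈ [0,1]. Define 𝒯_t(x) = ∫_ℝ t^{-β} |ξ|^{-α} χ_{\{t|ξ|^σ > M\}}(ξ) e^{ixξ} dξ. Then |(|∇|^{-s} 𝒯_t)(x)| ≲_s |x|^{s-1} for all x ≠ 0, with implicit constant independent of t > 0. -/
/-!
Put `R = (M / t) ^ (β / α)` and `a = s + α`. The cutoff `t |ξ| ^ (α / β) > M` is exactly
`|ξ| > R`, and `t ^ (-β) = M ^ (-β) R ^ α`, so the integral is `M ^ (-β) R ^ α (J x + J (-x))`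
with `J x = ∫_R^∞ ξ ^ (-a) e^{i x ξ} dξ`. Absolute integrability gives `‖J x‖ ≤ R ^ (1 - a) / (a - 1)`
and one integration by parts gives `‖J x‖ ≤ 2 R ^ (-a) / |x|`. The first bound is the better one
when `R |x| ≤ 1`, the second when `R |x| ≥ 1`, and since `0 ≤ s ≤ 1` either one yields
`R ^ α ‖J x‖ ≲ |x| ^ (s - 1)`.
-/

open MeasureTheory Complex Set Filter Topology

section TailIntegral

variable {a x R : ℝ}

lemma norm_rpow_mul_exp_I_mul (a x : ℝ) {ξ : ℝ} (hξ : 0 ≤ ξ) :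
    ‖((ξ ^ (-a) : ℝ) : ℂ) * exp (I * x * ξ)‖ = ξ ^ (-a) := by
  rw [norm_mul, norm_real, Real.norm_of_nonneg (Real.rpow_nonneg hξ _)]
  simp [Complex.norm_exp]

lemma integrableOn_Ioi_rpow_mul_exp_I_mul (x : ℝ) (ha : 1 < a) (hR : 0 < R) :
    IntegrableOn (fun ξ : ℝ => ((ξ ^ (-a) : ℝ) : ℂ) * exp (I * x * ξ)) (Ioi R) := by
  refine (integrableOn_Ioi_rpow_of_lt (by linarith) hR).mono' ?_
    (ae_restrict_of_forall_mem measurableSet_Ioi fun ξ hξ =>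
      (norm_rpow_mul_exp_I_mul a x (hR.trans hξ).le).le)
  refine ContinuousOn.aestronglyMeasurable (fun ξ hξ => ?_) measurableSet_Ioi
  exact ((continuous_ofReal.continuousAt.comp
    (Real.continuousAt_rpow_const ξ (-a) (Or.inl (hR.trans hξ).ne'))).mul
    (by fun_prop)).continuousWithinAt

lemma norm_integral_Ioi_rpow_mul_exp_I_mul_le (x : ℝ) (ha : 1 < a) (hR : 0 < R) :
    ‖∫ ξ in Ioi R, ((ξ ^ (-a) : ℝ) : ℂ) * exp (I * x * ξ)‖ ≤ R ^ (1 - a) / (a - 1) :=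
  calc _ ≤ ∫ ξ in Ioi R, ξ ^ (-a) :=
        norm_integral_le_of_norm_le (integrableOn_Ioi_rpow_of_lt (by linarith) hR)
          (ae_restrict_of_forall_mem measurableSet_Ioi fun ξ hξ =>
            (norm_rpow_mul_exp_I_mul a x (hR.trans hξ).le).le)
    _ = R ^ (1 - a) / (a - 1) := by
        rw [integral_Ioi_rpow_of_lt (by linarith) hR, neg_div, ← div_neg]
        ring_nf

lemma hasDerivAt_rpow_mul_exp_I_mul_div (a : ℝ) {x ξ : ℝ} (hx : x ≠ 0) (hξ : 0 < ξ) :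
    HasDerivAt (fun η : ℝ => ((η ^ (-a) : ℝ) : ℂ) * exp (I * x * η) / (I * x))
      (((ξ ^ (-a) : ℝ) : ℂ) * exp (I * x * ξ)
        - a / (I * x) * (((ξ ^ (-(a + 1)) : ℝ) : ℂ) * exp (I * x * ξ))) ξ := by
  have hpow := (Real.hasDerivAt_rpow_const (p := -a) (Or.inl hξ.ne')).ofReal_comp
  have hexp := (((hasDerivAt_id (ξ : ℂ)).comp_ofReal).const_mul (I * x)).cexp
  refine ((hpow.mul hexp).div_const (I * x)).congr_deriv ?_
  have hx' : (x : ℂ) ≠ 0 := ofReal_ne_zero.mpr hx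
  rw [show -(a + 1) = -a - 1 by ring]
  simp only [id]
  push_cast
  field_simp
  ring

lemma norm_integral_Ioi_rpow_mul_exp_I_mul_le_div (ha : 1 < a) (hR : 0 < R) (hx : x ≠ 0) :
    ‖∫ ξ in Ioi R, ((ξ ^ (-a) : ℝ) : ℂ) * exp (I * x * ξ)‖ ≤ 2 * R ^ (-a) / |x| := by
  set F : ℝ → ℂ := fun η => ((η ^ (-a) : ℝ) : ℂ) * exp (I * x * η) / (I * x)
  have hnormF : ∀ η, 0 < η → ‖F η‖ = η ^ (-a) / |x| := fun η hη => by
    rw [norm_div, norm_rpow_mul_exp_I_mul a x hη.le]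
    simp
  have hF_lim : Tendsto F atTop (𝓝 0) := by
    refine tendsto_zero_iff_norm_tendsto_zero.mpr ?_
    have hdecay := (tendsto_rpow_neg_atTop (by linarith : 0 < a)).div_const |x|
    rw [zero_div] at hdecay
    refine hdecay.congr' (EventuallyEq.symm ?_)
    filter_upwards [eventually_gt_atTop 0] with η hη using hnormF η hη
  have hf := integrableOn_Ioi_rpow_mul_exp_I_mul x ha hR
  have hg := (integrableOn_Ioi_rpow_mul_exp_I_mul (a := a + 1) x (by linarith) hR).const_mul
    ((a : ℂ) / (I * x))
  have hparts := integral_Ioi_of_hasDerivAt_of_tendsto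
    (hasDerivAt_rpow_mul_exp_I_mul_div a hx hR).continuousAt.continuousWithinAt
    (fun ξ hξ => hasDerivAt_rpow_mul_exp_I_mul_div a hx (hR.trans hξ)) (hf.sub hg) hF_lim
  rw [integral_sub hf hg, integral_const_mul, zero_sub, sub_eq_iff_eq_add] at hparts
  have hcoef : ‖(a : ℂ) / (I * x)‖ = a / |x| := by
    simp [abs_of_pos (by linarith : 0 < a)]
  rw [hparts]
  calc _ ≤ ‖F R‖ + ‖(a : ℂ) / (I * x)‖
          * ‖∫ ξ in Ioi R, ((ξ ^ (-(a + 1)) : ℝ) : ℂ) * exp (I * x * ξ)‖ := by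
        rw [← norm_neg (F R), ← norm_mul]; exact norm_add_le _ _
    _ ≤ R ^ (-a) / |x| + a / |x| * (R ^ (1 - (a + 1)) / (a + 1 - 1)) := by
        rw [hnormF R hR, hcoef]
        gcongr
        exact norm_integral_Ioi_rpow_mul_exp_I_mul_le x (by linarith) hR
    _ = 2 * R ^ (-a) / |x| := by
        rw [show 1 - (a + 1) = -a by ring, add_sub_cancel_right]
        field_simp
        ring

lemma norm_integral_Ioi_rpow_mul_exp_I_mul_le_rpow {s : ℝ} (hs0 : 0 ≤ s) (hs1 : s ≤ 1)
    (ha : 1 < a) (hR : 0 < R) (hx : x ≠ 0) :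
    ‖∫ ξ in Ioi R, ((ξ ^ (-a) : ℝ) : ℂ) * exp (I * x * ξ)‖
      ≤ (1 / (a - 1) + 2) * R ^ (s - a) * |x| ^ (s - 1) := by
  have hxa : 0 < |x| := abs_pos.mpr hx
  have hC : 0 ≤ 1 / (a - 1) := one_div_nonneg.mpr (by linarith)
  rcases le_total (R * |x|) 1 with hsmall | hlarge
  · have hRs : R ^ (1 - s) ≤ |x| ^ (s - 1) :=
      calc R ^ (1 - s) ≤ |x|⁻¹ ^ (1 - s) :=
            Real.rpow_le_rpow hR.le (by rwa [← one_div, le_div_iff₀ hxa]) (by linarith)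
        _ = |x| ^ (s - 1) := by rw [Real.inv_rpow hxa.le, ← Real.rpow_neg hxa.le, neg_sub]
    calc _ ≤ R ^ (1 - a) / (a - 1) := norm_integral_Ioi_rpow_mul_exp_I_mul_le x ha hR
      _ = 1 / (a - 1) * R ^ (s - a) * R ^ (1 - s) := by
          rw [mul_assoc, ← Real.rpow_add hR]; ring_nf
      _ ≤ 1 / (a - 1) * R ^ (s - a) * |x| ^ (s - 1) := by gcongr
      _ ≤ _ := by gcongr; linarith
  · have hRs : R ^ (-s) ≤ |x| ^ s :=
      calc R ^ (-s) ≤ |x|⁻¹ ^ (-s) :=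
            Real.rpow_le_rpow_of_nonpos (by positivity) (by rwa [← one_div, div_le_iff₀ hxa])
              (by linarith)
        _ = |x| ^ s := by rw [Real.inv_rpow hxa.le, ← Real.rpow_neg hxa.le, neg_neg]
    calc _ ≤ 2 * R ^ (-a) / |x| := norm_integral_Ioi_rpow_mul_exp_I_mul_le_div ha hR hx
      _ = 2 * R ^ (s - a) * (R ^ (-s) * |x| ^ (-1 : ℝ)) := by
          rw [← mul_assoc, mul_assoc 2, ← Real.rpow_add hR, Real.rpow_neg_one]; ring_nf
      _ ≤ 2 * R ^ (s - a) * (|x| ^ s * |x| ^ (-1 : ℝ)) := by gcongr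
      _ = 2 * R ^ (s - a) * |x| ^ (s - 1) := by rw [← Real.rpow_add hxa, ← sub_eq_add_neg]
      _ ≤ _ := by gcongr; linarith

lemma setIntegral_abs_gt_rpow_mul_exp_I_mul (x : ℝ) (ha : 1 < a) (hR : 0 < R) :
    ∫ ξ in {ξ : ℝ | R < |ξ|}, ((|ξ| ^ (-a) : ℝ) : ℂ) * exp (I * x * ξ)
      = (∫ ξ in Ioi R, ((ξ ^ (-a) : ℝ) : ℂ) * exp (I * x * ξ))
        + ∫ ξ in Ioi R, ((ξ ^ (-a) : ℝ) : ℂ) * exp (I * (-x : ℝ) * ξ) := by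
  set K : ℝ → ℂ := fun ξ => ((|ξ| ^ (-a) : ℝ) : ℂ) * exp (I * x * ξ)
  have hK_pos : EqOn K (fun ξ => ((ξ ^ (-a) : ℝ) : ℂ) * exp (I * x * ξ)) (Ioi R) :=
    fun ξ hξ => by simp only [K, abs_of_pos (hR.trans hξ)]
  have hK_neg : EqOn (fun ξ => K (-ξ))
      (fun ξ => ((ξ ^ (-a) : ℝ) : ℂ) * exp (I * (-x : ℝ) * ξ)) (Ioi R) :=
    fun ξ hξ => by simp only [K, abs_neg, abs_of_pos (hR.trans hξ)]; push_cast; ring_nf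
  have hIoi : IntegrableOn K (Ioi R) :=
    (integrableOn_Ioi_rpow_mul_exp_I_mul x ha hR).congr_fun hK_pos.symm measurableSet_Ioi
  have hIio : IntegrableOn K (Iio (-R)) := by
    have h := (integrableOn_Ioi_rpow_mul_exp_I_mul (-x) ha hR).congr_fun hK_neg.symm
      measurableSet_Ioi
    rw [← neg_neg R] at h
    simpa using h.comp_neg_Iio
  have hsplit : {ξ : ℝ | R < |ξ|} = Ioi R ∪ Iio (-R) := by
    ext ξ; simp [lt_abs, lt_neg]
  rw [hsplit, setIntegral_union (Ioi_disjoint_Iio_of_le (by linarith)) measurableSet_Iio hIoi hIio,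
    setIntegral_congr_fun measurableSet_Ioi hK_pos, ← integral_Iic_eq_integral_Iio,
    ← integral_comp_neg_Ioi, setIntegral_congr_fun measurableSet_Ioi hK_neg]

end TailIntegral

lemma lt_mul_rpow_iff_div_rpow_inv_lt {M t p y : ℝ} (hM : 0 ≤ M) (ht : 0 < t) (hp : 0 < p)
    (hy : 0 ≤ y) : M < t * y ^ p ↔ (M / t) ^ p⁻¹ < y := by
  rw [Real.rpow_inv_lt_iff_of_pos (div_nonneg hM ht.le) hy hp, div_lt_iff₀' ht]

theorem stmt5_general (α β M s : ℝ) (hα : 1 < α) (hβ0 : 0 < β)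
    (hM : 0 < M) (hs : s ∈ Set.Icc (0:ℝ) 1) :
    ∃ C : ℝ, 0 < C ∧ ∀ t : ℝ, 0 < t → ∀ x : ℝ, x ≠ 0 →
      ‖∫ ξ : ℝ, ((t ^ (-β) : ℝ) : ℂ) * ((|ξ| ^ (-s - α) : ℝ) : ℂ)
          * (if M < t * |ξ| ^ (α / β) then (1:ℂ) else 0)
          * Complex.exp (Complex.I * (x : ℂ) * (ξ : ℂ))‖
        ≤ C * |x| ^ (s - 1) := by
  obtain ⟨hs0, hs1⟩ := hs
  have hsα : 1 < s + α := by linarith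
  refine ⟨2 * M ^ (-β) * (1 / (s + α - 1) + 2), by
    have := sub_pos.mpr hsα; positivity, fun t ht x hx => ?_⟩
  set R := (M / t) ^ (α / β)⁻¹
  have hR : 0 < R := by positivity
  have hcutoff : ∀ ξ : ℝ, M < t * |ξ| ^ (α / β) ↔ R < |ξ| := fun ξ =>
    lt_mul_rpow_iff_div_rpow_inv_lt hM.le ht (by positivity) (abs_nonneg ξ)
  have hscale : t ^ (-β) * R ^ (s - (s + α)) = M ^ (-β) := by
    have hexp : (α / β)⁻¹ * (s - (s + α)) = -β := by field_simp; ring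
    rw [← Real.rpow_mul (by positivity), hexp, ← Real.mul_rpow ht.le (by positivity),
      mul_div_cancel₀ M ht.ne']
  have hintegrand : ∀ ξ : ℝ, ((t ^ (-β) : ℝ) : ℂ) * ((|ξ| ^ (-s - α) : ℝ) : ℂ)
        * (if M < t * |ξ| ^ (α / β) then (1:ℂ) else 0) * exp (I * x * ξ)
      = ((t ^ (-β) : ℝ) : ℂ) * {ξ : ℝ | R < |ξ|}.indicator
          (fun ξ => ((|ξ| ^ (-(s + α)) : ℝ) : ℂ) * exp (I * x * ξ)) ξ := fun ξ => by
    simp only [indicator_apply, mem_ofPred_eq, hcutoff, neg_add']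
    split_ifs <;> ring
  simp_rw [hintegrand]
  rw [integral_const_mul, integral_indicator (measurableSet_lt measurable_const measurable_abs),
    setIntegral_abs_gt_rpow_mul_exp_I_mul x hsα hR, norm_mul, norm_real,
    Real.norm_of_nonneg (by positivity)]
  have hbound := fun y (hy : y ≠ 0) =>
    norm_integral_Ioi_rpow_mul_exp_I_mul_le_rpow (x := y) hs0 hs1 hsα hR hy
  calc _ ≤ t ^ (-β) * ((1 / (s + α - 1) + 2) * R ^ (s - (s + α)) * |x| ^ (s - 1)
          + (1 / (s + α - 1) + 2) * R ^ (s - (s + α)) * |-x| ^ (s - 1)) := by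
        gcongr
        exact (norm_add_le _ _).trans (add_le_add (hbound x hx) (hbound (-x) (neg_ne_zero.mpr hx)))
    _ = _ := by rw [abs_neg, ← hscale]; ring

/-- Kernel decay bound: for `α > 1`, `β ∈ (0,1)`, `σ = α/β`, `s ∈ [0,1]`,
the kernel `|∇|^{-s}𝒯_t(x) = ∫ t^{-β}|ξ|^{-s-α} χ_{t|ξ|^σ > M}(ξ) e^{ixξ} dξ`
satisfies `|(|∇|^{-s}𝒯_t)(x)| ≲_s |x|^{s-1}` uniformly in `t > 0`. -/
theorem stmt5 (α β M s : ℝ) (hα : 1 < α) (hβ0 : 0 < β) (hβ1 : β < 1)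
    (hM : 0 < M) (hs : s ∈ Set.Icc (0:ℝ) 1) :
    ∃ C : ℝ, 0 < C ∧ ∀ t : ℝ, 0 < t → ∀ x : ℝ, x ≠ 0 →
      ‖∫ ξ : ℝ, ((t ^ (-β) : ℝ) : ℂ) * ((|ξ| ^ (-s - α) : ℝ) : ℂ)
          * (if M < t * |ξ| ^ (α / β) then (1:ℂ) else 0)
          * Complex.exp (Complex.I * (x : ℂ) * (ξ : ℂ))‖
        ≤ C * |x| ^ (s - 1) :=
  stmt5_general α β M s hα hβ0 hM hs
end

section
/- Let β ∈ (0,1), α > 0, and let E_β(z) = Σ_{k≥0} z^k/Γ(βk+1) be the Mittag-Leffler function. For f ∈ L²(ℝ), define mult operator U: (U_T f)^(ξ) = E_β(i^{-β} T^β |ξ|^α) f̂(ξ). Assuming the asymptotic bound |E_β(i^{-β} t^β |ξ|^α) - (1/β) e^{-it|ξ|^σ}| ≲ t^{-β}|ξ|^{-α} for t^β|ξ|^α ≥ M large (where σ = α/β), one has ‖u(t)‖_{L²_x} ≤ C ‖f‖_{L²_x} uniformly in t ≥ 0, and lim_{t→∞} ‖u(t)‖_{L²_x} = (1/β) ‖f‖_{L²_x},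 where u(t) = U_t f. -/
/-!
By log-convexity of `Γ`, `Γ(x) / Γ(x + β) ≤ (x + β)^(1-β) / x → 0`, so the ratio test makes the
Mittag-Leffler series converge absolutely and `|E_β(z)| ≤ Σ Mᵏ / Γ(βk + 1)` on `|z| ≤ M`. Where
`t^β |ξ|^α ≥ M` the asymptotic bound gives `|E_β| ≤ 1/β + C₀/M` instead, so the multiplier is
uniformly bounded, which is the `L²` bound. For `ξ ≠ 0` the same bound forces
`|E_β(i^{-β} t^β |ξ|^α)| → 1/β`, and dominated convergence gives the limit of the mass.
-/

open MeasureTheory Complex Filter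

/-- Mittag-Leffler function `E_β(z) = Σ_{k≥0} z^k/Γ(βk+1)`. -/
noncomputable def mlE (β : ℝ) (z : ℂ) : ℂ :=
  ∑' k : ℕ, z ^ k / ((Real.Gamma (β * (k:ℝ) + 1) : ℝ) : ℂ)

open Topology

namespace Real

theorem Gamma_div_Gamma_add_le {β x : ℝ} (hβ0 : 0 < β) (hβ1 : β < 1) (hx : 0 < x) :
    Gamma x / Gamma (x + β) ≤ (x + β) ^ (1 - β) / x := by
  have hxβ : 0 < x + β := by linarith
  have hG : 0 < Gamma (x + β) := Gamma_pos_of_pos hxβ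
  -- log-convexity of `Γ` at `x + 1 = β (x + β) + (1 - β) (x + β + 1)`
  have h := Gamma_mul_add_mul_le_rpow_Gamma_mul_rpow_Gamma hxβ (by linarith : 0 < x + β + 1)
    hβ0 (by linarith : 0 < 1 - β) (by ring)
  rw [show β * (x + β) + (1 - β) * (x + β + 1) = x + 1 by ring, Gamma_add_one hx.ne',
    Gamma_add_one hxβ.ne', mul_rpow hxβ.le hG.le, mul_left_comm, ← rpow_add hG,
    add_sub_cancel, rpow_one] at h
  rw [div_le_div_iff₀ hG hx]
  linarith

theorem tendsto_add_rpow_one_sub_div_atTop {β : ℝ} (hβ : 0 < β) (c : ℝ) :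
    Tendsto (fun x : ℝ => (x + c) ^ (1 - β) / x) atTop (𝓝 0) := by
  have hshift : Tendsto (fun x : ℝ => x + c) atTop atTop :=
    tendsto_atTop_add_const_right _ c tendsto_id
  have hratio : Tendsto (fun x : ℝ => 1 + c * x⁻¹) atTop (𝓝 1) := by
    simpa using (tendsto_inv_atTop_zero.const_mul c).const_add 1
  have hprod := hratio.mul ((tendsto_rpow_neg_atTop hβ).comp hshift)
  rw [one_mul] at hprod
  refine hprod.congr' ?_
  filter_upwards [eventually_gt_atTop 0, eventually_gt_atTop (-c)] with x hx hxc
  have hxc' : 0 < x + c := by linarith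
  simp only [Function.comp_apply]
  rw [sub_eq_add_neg, rpow_add hxc', rpow_one]
  field_simp

theorem summable_pow_div_Gamma {β : ℝ} (hβ0 : 0 < β) (hβ1 : β < 1) (R : ℝ) :
    Summable fun k : ℕ => R ^ k / Gamma (β * k + 1) := by
  rcases eq_or_ne R 0 with rfl | hR
  · refine summable_of_ne_finset_zero (s := {0}) fun k hk => ?_
    simp [zero_pow (by simpa using hk : k ≠ 0)]
  have hx : ∀ k : ℕ, 0 < β * k + 1 := fun k => by positivity
  have hxk : Tendsto (fun k : ℕ => β * k + 1) atTop atTop :=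
    tendsto_atTop_add_const_right _ 1 ((tendsto_natCast_atTop_atTop).const_mul_atTop hβ0)
  refine summable_of_ratio_test_tendsto_lt_one zero_lt_one
    (Eventually.of_forall fun k => div_ne_zero (pow_ne_zero k hR) (Gamma_pos_of_pos (hx k)).ne') ?_
  have hupper := ((tendsto_add_rpow_one_sub_div_atTop hβ0 β).comp hxk).const_mul |R|
  rw [mul_zero] at hupper
  refine squeeze_zero (fun k => by positivity) (fun k => ?_) hupper
  have hGk := Gamma_pos_of_pos (hx k)
  have hGk1 := Gamma_pos_of_pos (hx (k + 1))
  have hshift : β * ((k + 1 : ℕ) : ℝ) + 1 = (β * k + 1) + β := by push_cast; ring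
  calc ‖R ^ (k + 1) / Gamma (β * ((k + 1 : ℕ) : ℝ) + 1)‖ / ‖R ^ k / Gamma (β * k + 1)‖
      = |R| * (Gamma (β * k + 1) / Gamma ((β * k + 1) + β)) := by
        rw [hshift] at hGk1 ⊢
        rw [norm_div, norm_div, norm_pow, norm_pow, Real.norm_eq_abs, Real.norm_eq_abs,
          Real.norm_eq_abs, abs_of_pos hGk, abs_of_pos hGk1, pow_succ]
        field_simp
    _ ≤ |R| * (((β * k + 1) + β) ^ (1 - β) / (β * k + 1)) :=
        mul_le_mul_of_nonneg_left (Gamma_div_Gamma_add_le hβ0 hβ1 (hx k)) (abs_nonneg R)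

end Real

theorem norm_pow_div_Gamma {β : ℝ} (hβ : 0 < β) (z : ℂ) (k : ℕ) :
    ‖z ^ k / (Real.Gamma (β * k + 1) : ℂ)‖ = ‖z‖ ^ k / Real.Gamma (β * k + 1) := by
  rw [norm_div, norm_pow, Complex.norm_real, Real.norm_eq_abs,
    abs_of_pos (Real.Gamma_pos_of_pos (by positivity))]

theorem summable_norm_pow_div_Gamma {β : ℝ} (hβ0 : 0 < β) (hβ1 : β < 1) (z : ℂ) :
    Summable fun k : ℕ => ‖z ^ k / (Real.Gamma (β * k + 1) : ℂ)‖ := by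
  simpa only [norm_pow_div_Gamma hβ0] using Real.summable_pow_div_Gamma hβ0 hβ1 ‖z‖

theorem hasSum_mlE {β : ℝ} (hβ0 : 0 < β) (hβ1 : β < 1) (z : ℂ) :
    HasSum (fun k : ℕ => z ^ k / (Real.Gamma (β * k + 1) : ℂ)) (mlE β z) :=
  (summable_norm_pow_div_Gamma hβ0 hβ1 z).of_norm.hasSum

theorem norm_mlE_le {β R : ℝ} (hβ0 : 0 < β) (hβ1 : β < 1) {z : ℂ} (hz : ‖z‖ ≤ R) :
    ‖mlE β z‖ ≤ ∑' k : ℕ, R ^ k / Real.Gamma (β * k + 1) := by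
  refine tsum_of_norm_bounded (Real.summable_pow_div_Gamma hβ0 hβ1 R).hasSum fun k => ?_
  rw [norm_pow_div_Gamma hβ0]
  gcongr

theorem measurable_mlE {β : ℝ} (hβ0 : 0 < β) (hβ1 : β < 1) : Measurable (mlE β) :=
  measurable_of_tendsto_metrizable' atTop
    (fun n => by fun_prop)
    (tendsto_pi_nhds.2 fun z => (hasSum_mlE hβ0 hβ1 z).tendsto_sum_nat)

/-- The Fourier multiplier of the solution operator `U_t`. -/
noncomputable def fracSchrodingerSymbol (β α t ξ : ℝ) : ℂ :=
  mlE β (I ^ (-(β : ℂ)) * ((t ^ β * |ξ| ^ α : ℝ) : ℂ))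

def FracSchrodingerAsymptotics (β α M C₀ : ℝ) : Prop :=
  ∀ t ξ : ℝ, 0 < t → M ≤ t ^ β * |ξ| ^ α →
    ‖fracSchrodingerSymbol β α t ξ
        - ((1 / β : ℝ) : ℂ) * exp (-(I * (t : ℂ) * ((|ξ| ^ (α / β) : ℝ) : ℂ)))‖
      ≤ C₀ * t ^ (-β) * |ξ| ^ (-α)

theorem norm_I_cpow_neg_mul_ofReal (β : ℝ) {r : ℝ} (hr : 0 ≤ r) :
    ‖I ^ (-(β : ℂ)) * (r : ℂ)‖ = r := by
  rw [norm_mul, show -(β : ℂ) = ((-β : ℝ) : ℂ) by push_cast; ring, norm_cpow_real, norm_I,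
    Real.one_rpow, one_mul, norm_real, Real.norm_of_nonneg hr]

theorem norm_ofReal_mul_exp_neg_I_mul (c t x : ℝ) :
    ‖(c : ℂ) * exp (-(I * (t : ℂ) * (x : ℂ)))‖ = |c| := by
  rw [norm_mul, norm_real, Real.norm_eq_abs,
    show -(I * (t : ℂ) * (x : ℂ)) = I * ((-(t * x) : ℝ) : ℂ) by push_cast; ring,
    norm_exp_I_mul_ofReal, mul_one]

section FracSchrodingerSymbol

variable {β α M C₀ : ℝ}

theorem measurable_fracSchrodingerSymbol (hβ0 : 0 < β) (hβ1 : β < 1) (t : ℝ) :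
    Measurable (fracSchrodingerSymbol β α t) :=
  (measurable_mlE hβ0 hβ1).comp (by fun_prop)

theorem norm_fracSchrodingerSymbol_sub_inv_le (hβ : 0 < β)
    (hasym : FracSchrodingerAsymptotics β α M C₀)
    {t ξ : ℝ} (ht : 0 < t) (hM : M ≤ t ^ β * |ξ| ^ α) :
    |‖fracSchrodingerSymbol β α t ξ‖ - 1 / β| ≤ C₀ * t ^ (-β) * |ξ| ^ (-α) := by
  have h := abs_norm_sub_norm_le (fracSchrodingerSymbol β α t ξ)
    (((1 / β : ℝ) : ℂ) * exp (-(I * (t : ℂ) * ((|ξ| ^ (α / β) : ℝ) : ℂ))))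
  rw [norm_ofReal_mul_exp_neg_I_mul, abs_of_pos (one_div_pos.2 hβ)] at h
  exact h.trans (hasym t ξ ht hM)

theorem norm_fracSchrodingerSymbol_le (hβ0 : 0 < β) (hβ1 : β < 1) (hM : 0 < M) (hC₀ : 0 ≤ C₀)
    (hasym : FracSchrodingerAsymptotics β α M C₀) {t : ℝ} (ht : 0 ≤ t) (ξ : ℝ) :
    ‖fracSchrodingerSymbol β α t ξ‖
      ≤ max (∑' k : ℕ, M ^ k / Real.Gamma (β * k + 1)) (1 / β + C₀ / M) := by
  have hr : 0 ≤ t ^ β * |ξ| ^ α := by positivity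
  rcases le_or_gt (t ^ β * |ξ| ^ α) M with hsmall | hlarge
  · refine le_max_of_le_left (norm_mlE_le hβ0 hβ1 ?_)
    rwa [norm_I_cpow_neg_mul_ofReal β hr]
  · have ht0 : 0 < t := by
      refine ht.lt_of_ne' fun h => ?_
      rw [h, Real.zero_rpow hβ0.ne', zero_mul] at hlarge
      linarith
    have hdecay : C₀ * t ^ (-β) * |ξ| ^ (-α) ≤ C₀ / M := by
      rw [Real.rpow_neg ht, Real.rpow_neg (abs_nonneg ξ), mul_assoc, ← mul_inv, div_eq_mul_inv]
      exact mul_le_mul_of_nonneg_left (inv_anti₀ hM hlarge.le) hC₀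
    have h := norm_fracSchrodingerSymbol_sub_inv_le hβ0 hasym ht0 hlarge.le
    exact le_max_of_le_right (by linarith [le_abs_self (‖fracSchrodingerSymbol β α t ξ‖ - 1 / β)])

theorem tendsto_norm_fracSchrodingerSymbol (hβ : 0 < β)
    (hasym : FracSchrodingerAsymptotics β α M C₀)
    {ξ : ℝ} (hξ : ξ ≠ 0) :
    Tendsto (fun t => ‖fracSchrodingerSymbol β α t ξ‖) atTop (𝓝 (1 / β)) := by
  have hξα : 0 < |ξ| ^ α := Real.rpow_pos_of_pos (abs_pos.2 hξ) α
  have hgrow : Tendsto (fun t : ℝ => t ^ β * |ξ| ^ α) atTop atTop :=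
    (tendsto_rpow_atTop hβ).atTop_mul_const hξα
  have hdecay : Tendsto (fun t : ℝ => C₀ * t ^ (-β) * |ξ| ^ (-α)) atTop (𝓝 0) := by
    simpa using ((tendsto_rpow_neg_atTop hβ).const_mul C₀).mul_const (|ξ| ^ (-α))
  rw [tendsto_iff_dist_tendsto_zero]
  refine squeeze_zero' (Eventually.of_forall fun t => dist_nonneg) ?_ hdecay
  filter_upwards [hgrow.eventually_ge_atTop M, eventually_gt_atTop 0] with t hM ht
  exact norm_fracSchrodingerSymbol_sub_inv_le hβ hasym ht hM

end FracSchrodingerSymbol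

section MultiplierL2

variable {X : Type*} [MeasurableSpace X] {μ : Measure X}

theorem sqrt_integral_norm_mul_sq_le {m g : X → ℂ} {B : ℝ} (hB : 0 ≤ B) (hm : ∀ x, ‖m x‖ ≤ B)
    (hg : Integrable (fun x => ‖g x‖ ^ 2) μ) :
    √(∫ x, ‖m x * g x‖ ^ 2 ∂μ) ≤ B * √(∫ x, ‖g x‖ ^ 2 ∂μ) := by
  have hpointwise : ∀ x, ‖m x * g x‖ ^ 2 ≤ B ^ 2 * ‖g x‖ ^ 2 := fun x => by
    rw [norm_mul, mul_pow]
    gcongr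
    exact hm x
  calc √(∫ x, ‖m x * g x‖ ^ 2 ∂μ) ≤ √(∫ x, B ^ 2 * ‖g x‖ ^ 2 ∂μ) :=
        Real.sqrt_le_sqrt (integral_mono_of_nonneg (Eventually.of_forall fun x => by positivity)
          (hg.const_mul _) (Eventually.of_forall hpointwise))
    _ = B * √(∫ x, ‖g x‖ ^ 2 ∂μ) := by
        rw [integral_const_mul, Real.sqrt_mul (sq_nonneg B), Real.sqrt_sq hB]

theorem tendsto_sqrt_integral_norm_mul_sq {ι : Type*} {l : Filter ι} [l.IsCountablyGenerated]
    {m : ι → X → ℂ} {g : X → ℂ} {B c : ℝ} (hc : 0 ≤ c)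
    (hm_meas : ∀ᶠ i in l, AEStronglyMeasurable (m i) μ) (hm : ∀ᶠ i in l, ∀ x, ‖m i x‖ ≤ B)
    (hlim : ∀ᵐ x ∂μ, Tendsto (fun i => ‖m i x‖) l (𝓝 c)) (hg : MemLp g 2 μ) :
    Tendsto (fun i => √(∫ x, ‖m i x * g x‖ ^ 2 ∂μ)) l (𝓝 (c * √(∫ x, ‖g x‖ ^ 2 ∂μ))) := by
  have hg2 := (memLp_two_iff_integrable_sq_norm hg.1).1 hg
  have hint :
      Tendsto (fun i => ∫ x, ‖m i x * g x‖ ^ 2 ∂μ) l (𝓝 (∫ x, (c * ‖g x‖) ^ 2 ∂μ)) := by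
    refine tendsto_integral_filter_of_dominated_convergence (fun x => B ^ 2 * ‖g x‖ ^ 2)
      (hm_meas.mono fun i hi => (hi.mul hg.1).norm.pow 2) ?_ (hg2.const_mul _) ?_
    · filter_upwards [hm] with i hi
      refine Eventually.of_forall fun x => ?_
      rw [Real.norm_of_nonneg (by positivity), norm_mul, mul_pow]
      gcongr
      exact hi x
    · filter_upwards [hlim] with x hx
      simpa only [norm_mul] using (hx.mul_const ‖g x‖).pow 2
  have hsqrt := (Real.continuous_sqrt.tendsto _).comp hint
  rwa [Function.comp_def, funext fun x => mul_pow c ‖g x‖ 2, integral_const_mul,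
    Real.sqrt_mul (sq_nonneg c), Real.sqrt_sq hc] at hsqrt

end MultiplierL2

theorem stmt11_general (β α : ℝ) (hβ : β ∈ Set.Ioo (0:ℝ) 1)
    (g : ℝ → ℂ) (hg : MemLp g 2 volume)
    (hasym : ∃ M C₀ : ℝ, 0 < M ∧ 0 < C₀ ∧ ∀ t ξ : ℝ, 0 < t →
      M ≤ t ^ β * |ξ| ^ α →
      ‖mlE β (Complex.I ^ (-(β:ℂ)) * ((t ^ β * |ξ| ^ α : ℝ) : ℂ))
          - ((1/β : ℝ) : ℂ) * Complex.exp (-(Complex.I * (t : ℂ) * ((|ξ| ^ (α/β) : ℝ) : ℂ)))‖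
        ≤ C₀ * t ^ (-β) * |ξ| ^ (-α)) :
    (∃ C : ℝ, 0 < C ∧ ∀ t : ℝ, 0 ≤ t →
        (∫ ξ : ℝ, ‖mlE β (Complex.I ^ (-(β:ℂ)) * ((t ^ β * |ξ| ^ α : ℝ) : ℂ)) * g ξ‖ ^ 2) ^ ((1:ℝ)/2)
          ≤ C * (∫ ξ : ℝ, ‖g ξ‖ ^ 2) ^ ((1:ℝ)/2))
    ∧ Tendsto (fun t : ℝ =>
        (∫ ξ : ℝ, ‖mlE β (Complex.I ^ (-(β:ℂ)) * ((t ^ β * |ξ| ^ α : ℝ) : ℂ)) * g ξ‖ ^ 2) ^ ((1:ℝ)/2))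
        atTop (nhds ((1/β) * (∫ ξ : ℝ, ‖g ξ‖ ^ 2) ^ ((1:ℝ)/2))) := by
  obtain ⟨hβ0, hβ1⟩ := hβ
  obtain ⟨M, C₀, hM, hC₀, hasym⟩ := hasym
  set B := max (∑' k : ℕ, M ^ k / Real.Gamma (β * k + 1)) (1 / β + C₀ / M)
  have hB : 0 < B := lt_max_of_lt_right (by positivity)
  have hbound : ∀ t, 0 ≤ t → ∀ ξ, ‖fracSchrodingerSymbol β α t ξ‖ ≤ B := fun t ht =>
    norm_fracSchrodingerSymbol_le hβ0 hβ1 hM hC₀.le hasym ht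
  simp only [← Real.sqrt_eq_rpow]
  refine ⟨⟨B, hB, fun t ht => sqrt_integral_norm_mul_sq_le (m := fracSchrodingerSymbol β α t)
    hB.le (hbound t ht) ((memLp_two_iff_integrable_sq_norm hg.1).1 hg)⟩, ?_⟩
  refine tendsto_sqrt_integral_norm_mul_sq (m := fracSchrodingerSymbol β α) (by positivity)
    (Eventually.of_forall fun t =>
      (measurable_fracSchrodingerSymbol hβ0 hβ1 t).aestronglyMeasurable)
    ((eventually_ge_atTop 0).mono hbound) ?_ hg
  filter_upwards [Measure.ae_ne volume 0] with ξ hξ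
  exact tendsto_norm_fracSchrodingerSymbol hβ0 hasym hξ

/-- Uniform `L²` bound and asymptotic mass for the linear space-time fractional
Schrödinger multiplier `E_β(i^{-β} t^β |ξ|^α)` (stated on the Fourier side, `g = f̂`):
`‖u(t)‖_{L²} ≤ C‖f‖_{L²}` uniformly in `t ≥ 0`, and
`lim_{t→∞} ‖u(t)‖_{L²} = (1/β)‖f‖_{L²}`. -/
theorem stmt11 (β α : ℝ) (hβ : β ∈ Set.Ioo (0:ℝ) 1) (hα : 0 < α)
    (g : ℝ → ℂ) (hg : MemLp g 2 volume)
    (hasym : ∃ M C₀ : ℝ, 0 < M ∧ 0 < C₀ ∧ ∀ t ξ : ℝ, 0 < t →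
      M ≤ t ^ β * |ξ| ^ α →
      ‖mlE β (Complex.I ^ (-(β:ℂ)) * ((t ^ β * |ξ| ^ α : ℝ) : ℂ))
          - ((1/β : ℝ) : ℂ) * Complex.exp (-(Complex.I * (t : ℂ) * ((|ξ| ^ (α/β) : ℝ) : ℂ)))‖
        ≤ C₀ * t ^ (-β) * |ξ| ^ (-α)) :
    (∃ C : ℝ, 0 < C ∧ ∀ t : ℝ, 0 ≤ t →
        (∫ ξ : ℝ, ‖mlE β (Complex.I ^ (-(β:ℂ)) * ((t ^ β * |ξ| ^ α : ℝ) : ℂ)) * g ξ‖ ^ 2) ^ ((1:ℝ)/2)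
          ≤ C * (∫ ξ : ℝ, ‖g ξ‖ ^ 2) ^ ((1:ℝ)/2))
    ∧ Tendsto (fun t : ℝ =>
        (∫ ξ : ℝ, ‖mlE β (Complex.I ^ (-(β:ℂ)) * ((t ^ β * |ξ| ^ α : ℝ) : ℂ)) * g ξ‖ ^ 2) ^ ((1:ℝ)/2))
        atTop (nhds ((1/β) * (∫ ξ : ℝ, ‖g ξ‖ ^ 2) ^ ((1:ℝ)/2))) :=
  stmt11_general β α hβ g hg hasym
end

section
/- Let p ≥ 2 be an integer and λ < 0. Then |∫_ℝ ((1-e^{-ix})/(ix))^p e^{ixλ} dx| ≤ c_p e^{λ} for a constant c_p depending only on p; in particular F(λ) decays exponentially as λ → -∞. -/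
/-!
The integrand extends to the entire function `H(z) = φ(iz)^p e^{izλ}` with `φ(w) = (1 - e^{-w})/w`.
On the closed lower half-plane `Re(iz) ≥ 0`, so `|φ(iz)| ≤ 4 / (1 + |z|)`; as `p ≥ 2`, `H` is
integrable along horizontal lines there and uniformly small on far-out vertical segments. Cauchy's
theorem on rectangles thus moves the integral from `ℝ` to `ℝ - i`, where `|e^{izλ}| = e^λ`, giving
the bound `4^p π e^λ`.
-/

open Set Filter Topology MeasureTheory Complex

namespace Complex

theorem integral_add_mul_I_eq_of_tendsto_vertical {E : Type*} [NormedAddCommGroup E]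
    [NormedSpace ℂ E] [CompleteSpace E] {f : ℂ → E} {a b : ℝ} (hf : Differentiable ℂ f)
    (ha : Integrable fun x : ℝ => f (x + a * I)) (hb : Integrable fun x : ℝ => f (x + b * I))
    (hvert : Tendsto (fun R : ℝ => ∫ y in a..b, f (R + y * I)) (cocompact ℝ) (𝓝 0)) :
    ∫ x : ℝ, f (x + a * I) = ∫ x : ℝ, f (x + b * I) := by
  have hrect (R : ℝ) : ((∫ x in -R..R, f (x + a * I)) - ∫ x in -R..R, f (x + b * I)) +
      I • (∫ y in a..b, f (R + y * I)) - I • (∫ y in a..b, f ((-R : ℝ) + y * I)) = 0 := by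
    simpa using integral_boundary_rect_eq_zero_of_differentiableOn f ((-R : ℝ) + a * I)
      (R + b * I) hf.differentiableOn
  have hlim : Tendsto (fun R : ℝ => ((∫ x in -R..R, f (x + a * I)) -
      ∫ x in -R..R, f (x + b * I)) + I • (∫ y in a..b, f (R + y * I)) -
      I • (∫ y in a..b, f ((-R : ℝ) + y * I))) atTop
      (𝓝 (((∫ x : ℝ, f (x + a * I)) - ∫ x : ℝ, f (x + b * I)) + I • (0 : E) - I • (0 : E))) :=
    (((intervalIntegral_tendsto_integral ha tendsto_neg_atTop_atBot tendsto_id).sub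
      (intervalIntegral_tendsto_integral hb tendsto_neg_atTop_atBot tendsto_id)).add
      ((hvert.mono_left atTop_le_cocompact).const_smul I)).sub
      (((hvert.mono_left atBot_le_cocompact).comp tendsto_neg_atTop_atBot).const_smul I)
  have := tendsto_nhds_unique hlim (by simp_rw [hrect]; exact tendsto_const_nhds)
  simpa [sub_eq_zero] using this

noncomputable def oneSubExpNegDiv : ℂ → ℂ :=
  dslope (fun w => 1 - exp (-w)) 0

theorem differentiable_oneSubExpNegDiv : Differentiable ℂ oneSubExpNegDiv := by
  rw [← differentiableOn_univ, oneSubExpNegDiv,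
    differentiableOn_dslope univ_mem]
  fun_prop

theorem oneSubExpNegDiv_of_ne_zero {w : ℂ} (hw : w ≠ 0) :
    oneSubExpNegDiv w = (1 - exp (-w)) / w := by
  simp [oneSubExpNegDiv, dslope_of_ne _ hw, slope_def_field]

theorem oneSubExpNegDiv_zero : oneSubExpNegDiv 0 = 1 := by
  rw [oneSubExpNegDiv, dslope_same]
  simpa using (((hasDerivAt_id (0 : ℂ)).neg.cexp).const_sub 1).deriv

theorem norm_oneSubExpNegDiv_le {w : ℂ} (hw : 0 ≤ w.re) :
    ‖oneSubExpNegDiv w‖ ≤ 4 / (1 + ‖w‖) := by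
  rcases eq_or_ne w 0 with rfl | hw0
  · norm_num [oneSubExpNegDiv_zero]
  have hpos : 0 < ‖w‖ := norm_pos_iff.2 hw0
  rw [oneSubExpNegDiv_of_ne_zero hw0, norm_div, div_le_div_iff₀ hpos (by positivity)]
  rcases le_or_gt ‖w‖ 1 with hsmall | hlarge
  · have : ‖1 - exp (-w)‖ ≤ 2 * ‖w‖ := by
      simpa [norm_sub_rev] using norm_exp_sub_one_le (x := -w) (by simpa using hsmall)
    nlinarith
  · have : ‖1 - exp (-w)‖ ≤ 2 :=
      calc ‖1 - exp (-w)‖ ≤ ‖(1 : ℂ)‖ + ‖exp (-w)‖ := norm_sub_le _ _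
        _ ≤ 1 + 1 := add_le_add norm_one.le (by simpa [norm_exp] using hw)
        _ = 2 := by norm_num
    nlinarith

theorem norm_oneSubExpNegDiv_pow_le {p : ℕ} (hp : 2 ≤ p) {w : ℂ} (hw : 0 ≤ w.re) :
    ‖oneSubExpNegDiv w‖ ^ p ≤ 4 ^ p / (1 + ‖w‖ ^ 2) := by
  calc ‖oneSubExpNegDiv w‖ ^ p ≤ (4 / (1 + ‖w‖)) ^ p := by
        gcongr; exact norm_oneSubExpNegDiv_le hw
    _ = 4 ^ p / (1 + ‖w‖) ^ p := div_pow _ _ _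
    _ ≤ 4 ^ p / (1 + ‖w‖) ^ 2 := by gcongr; exact le_add_of_nonneg_right (norm_nonneg w)
    _ ≤ 4 ^ p / (1 + ‖w‖ ^ 2) := by gcongr; nlinarith [norm_nonneg w]

end Complex

noncomputable def boxIntegrand (p : ℕ) (lam : ℝ) (z : ℂ) : ℂ :=
  oneSubExpNegDiv (I * z) ^ p * exp (I * z * lam)

theorem differentiable_boxIntegrand (p : ℕ) (lam : ℝ) :
    Differentiable ℂ (boxIntegrand p lam) :=
  ((differentiable_oneSubExpNegDiv.comp (differentiable_id.const_mul I)).pow p).mul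
    (by fun_prop)

theorem norm_boxIntegrand_le {p : ℕ} (hp : 2 ≤ p) (lam : ℝ) {z : ℂ} (hz : z.im ≤ 0) :
    ‖boxIntegrand p lam z‖ ≤ 4 ^ p * Real.exp (-(z.im * lam)) / (1 + z.re ^ 2) := by
  have hre : z.re ^ 2 ≤ ‖I * z‖ ^ 2 := by
    simpa [sq_abs] using pow_le_pow_left₀ (abs_nonneg _) (abs_re_le_norm z) 2
  have hφ := norm_oneSubExpNegDiv_pow_le hp (w := I * z) (by simpa using hz)
  rw [boxIntegrand, norm_mul, norm_pow, norm_exp, mul_div_right_comm]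
  gcongr
  · exact hφ.trans (by gcongr)
  · simp [mul_re, mul_im]

theorem integrable_boxIntegrand_horizontal {p : ℕ} (hp : 2 ≤ p) (lam : ℝ) {b : ℝ} (hb : b ≤ 0) :
    Integrable fun x : ℝ => boxIntegrand p lam (x + b * I) := by
  refine (integrable_inv_one_add_sq.const_mul (4 ^ p * Real.exp (-(b * lam)))).mono'
    ((differentiable_boxIntegrand p lam).continuous.comp (by fun_prop)).aestronglyMeasurable
    (ae_of_all _ fun x => ?_)
  simpa [div_eq_mul_inv] using norm_boxIntegrand_le hp lam (z := x + b * I) (by simpa using hb)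

theorem tendsto_boxIntegrand_vertical {p : ℕ} (hp : 2 ≤ p) {lam : ℝ} (hlam : lam ≤ 0)
    {a b : ℝ} (ha : a ≤ 0) (hb : b ≤ 0) :
    Tendsto (fun R : ℝ => ∫ y in a..b, boxIntegrand p lam (R + y * I)) (cocompact ℝ) (𝓝 0) := by
  have hbound : Tendsto (fun R : ℝ => 4 ^ p / (1 + R ^ 2) * |b - a|) (cocompact ℝ) (𝓝 0) := by
    have : Tendsto (fun R : ℝ => 1 + R ^ 2) (cocompact ℝ) atTop := by
      simpa [Real.norm_eq_abs, sq_abs] using tendsto_atTop_add_const_left _ 1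
        ((tendsto_pow_atTop two_ne_zero).comp (tendsto_norm_cocompact_atTop (E := ℝ)))
    simpa [div_eq_mul_inv] using ((this.inv_tendsto_atTop.const_mul (4 ^ p)).mul_const |b - a|)
  refine squeeze_zero_norm (fun R => intervalIntegral.norm_integral_le_of_norm_le_const
    fun y hy => ?_) hbound
  have hy : y ≤ 0 := (Set.uIoc_subset_uIcc hy |>.2).trans (max_le ha hb)
  calc ‖boxIntegrand p lam (R + y * I)‖
      ≤ 4 ^ p * Real.exp (-(y * lam)) / (1 + R ^ 2) := by
        simpa using norm_boxIntegrand_le hp lam (z := R + y * I) (by simpa using hy)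
    _ ≤ 4 ^ p * 1 / (1 + R ^ 2) := by gcongr; exact Real.exp_le_one_iff.2 (by nlinarith)
    _ = 4 ^ p / (1 + R ^ 2) := by rw [mul_one]

/-- Exponential decay of `F(λ)` for `λ < 0` and integer `p ≥ 2`:
`|∫_ℝ ((1-e^{-ix})/(ix))^p e^{ixλ} dx| ≤ c_p e^λ`. -/
theorem stmt14 (p : ℕ) (hp : 2 ≤ p) :
    ∃ c : ℝ, 0 < c ∧ ∀ lam : ℝ, lam < 0 →
      ‖∫ x : ℝ, ((1 - Complex.exp (-(Complex.I * (x : ℂ)))) / (Complex.I * (x : ℂ))) ^ p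
          * Complex.exp (Complex.I * (x : ℂ) * (lam : ℂ))‖
        ≤ c * Real.exp lam := by
  refine ⟨4 ^ p * Real.pi, by positivity, fun lam hlam => ?_⟩
  have hreal : ∀ᵐ x : ℝ, ((1 - exp (-(I * x))) / (I * x)) ^ p * exp (I * x * lam) =
      boxIntegrand p lam (x + (0 : ℝ) * I) := by
    filter_upwards [volume.ae_ne 0] with x hx
    simp [boxIntegrand, oneSubExpNegDiv_of_ne_zero, hx]
  have hshift := integral_add_mul_I_eq_of_tendsto_vertical (differentiable_boxIntegrand p lam)
    (integrable_boxIntegrand_horizontal hp lam le_rfl)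
    (integrable_boxIntegrand_horizontal hp lam (b := -1) (by norm_num))
    (tendsto_boxIntegrand_vertical hp hlam.le le_rfl (by norm_num))
  rw [integral_congr_ae hreal, hshift]
  calc ‖∫ x : ℝ, boxIntegrand p lam (x + (-1 : ℝ) * I)‖
      ≤ ∫ x : ℝ, 4 ^ p * Real.exp lam * (1 + x ^ 2)⁻¹ :=
        norm_integral_le_of_norm_le (integrable_inv_one_add_sq.const_mul _) (ae_of_all _ fun x => by
          simpa [div_eq_mul_inv] using norm_boxIntegrand_le hp lam (z := x + (-1 : ℝ) * I)
            (by simp))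
    _ = 4 ^ p * Real.pi * Real.exp lam := by
        rw [integral_const_mul, integral_univ_inv_one_add_sq]; ring
end
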